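/- Let Y ∈ ℝ^{n×q}, X = [X₁, …, X_K] with X_k ∈ ℝ^{n×p_k}, B*, B̂ ∈ ℝ^{p×q} with row-blocks B*_k, B̂_k ∈ ℝ^{p_k×q}, E = Y − XB*, Δ_k = B̂_k − B*_k, σ*² = ‖Y − XB*‖_F²/(nq), σ̂² = ‖Y − XB̂‖_F²/(nq), and let λ > 0, t > 0, η > 0, w_k > 0. If (i) d₁(X_kᵀE) ≤ nq t λ w_k/(1+η) for all k, and (ii) d₁(X_kᵀ(Y − XB̂)) ≤ λ t n q w_k for all k, then −((2+η)/(1+η)) t λ Σ_k w_k‖Δ_k‖_* ≤ σ*² − σ̂² ≤ (2tλ/(1+η)) Σ_k w_k‖Δ_k‖_*. -/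

import Mathlib

open Matrix

noncomputable def frobInner {m n : ℕ} (A B : Matrix (Fin m) (Fin n) ℝ) : ℝ := (Aᵀ * B).trace

noncomputable def frobNorm {m n : ℕ} (A : Matrix (Fin m) (Fin n) ℝ) : ℝ := Real.sqrt (Aᵀ * A).trace

noncomputable def nucNorm {m n : ℕ} (A : Matrix (Fin m) (Fin n) ℝ) : ℝ :=
  ((Matrix.posSemidef_conjTranspose_mul_self A).1.eigenvectorUnitary.1 *
    Matrix.diagonal ((RCLike.ofReal : ℝ → ℝ) ∘ (√·) ∘ (Matrix.posSemidef_conjTranspose_mul_self A).1.eigenvalues) *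
    (star (Matrix.posSemidef_conjTranspose_mul_self A).1.eigenvectorUnitary : Matrix (Fin n) (Fin n) ℝ)).trace

noncomputable def opNorm {m n : ℕ} (A : Matrix (Fin m) (Fin n) ℝ) : ℝ :=
  ‖LinearMap.toContinuousLinearMap (Matrix.toEuclideanLin A)‖

/-!
Write `E* = Y - X B*`, `Ê = Y - X B̂` and `S = E* - Ê = Σₖ Xₖ Δₖ`. Then
`‖E*‖² - ‖Ê‖² = ⟨E*, S⟩ + ⟨Ê, S⟩ = 2⟨E*, S⟩ - ‖S‖²`, and each pairing splits blockwise as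
`⟨E, S⟩ = Σₖ ⟨XₖᵀE, Δₖ⟩`. Trace duality `|⟨M, D⟩| ≤ d₁(M) ‖D‖_*` bounds every block; it follows
by evaluating `⟨M, D⟩ = Σᵢ ⟨M vᵢ, D vᵢ⟩` on an orthonormal eigenbasis `vᵢ` of `DᵀD`, for which
`‖D vᵢ‖` are the singular values of `D`. Hypotheses (i) and (ii) bound the two pairings.
-/

open scoped InnerProductSpace

lemma Matrix.trace_eq_sum_inner_toEuclideanLin {𝕜 ι n : Type*} [RCLike 𝕜] [Fintype ι] [Fintype n]
    [DecidableEq n] (A : Matrix n n 𝕜) (b : OrthonormalBasis ι 𝕜 (EuclideanSpace 𝕜 n)) :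
    A.trace = ∑ i, ⟪b i, toEuclideanLin A (b i)⟫_𝕜 := by
  rw [← LinearMap.trace_eq_sum_inner, LinearMap.trace_eq_matrix_trace 𝕜 (PiLp.basisFun 2 𝕜 n),
    toEuclideanLin, toLpLin_eq_toLin, LinearMap.toMatrix_toLin]

lemma Matrix.norm_toEuclideanLin_eigenvectorBasis_sq {m n : Type*} [Fintype m]
    [Fintype n] [DecidableEq m] [DecidableEq n] (D : Matrix m n ℝ) (hH : (Dᴴ * D).IsHermitian)
    (i : n) : ‖toEuclideanLin D (hH.eigenvectorBasis i)‖ ^ 2 = hH.eigenvalues i := by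
  set v := hH.eigenvectorBasis i
  have hv : toEuclideanLin (Dᴴ * D) v = hH.eigenvalues i • v := by
    rw [toLpLin_apply, hH.mulVec_eigenvectorBasis]; rfl
  rw [← real_inner_self_eq_norm_sq, ← LinearMap.adjoint_inner_right,
    ← toEuclideanLin_conjTranspose_eq_adjoint, ← LinearMap.comp_apply, ← toLpLin_mul, hv,
    real_inner_smul_right, real_inner_self_eq_norm_sq, hH.eigenvectorBasis.orthonormal.1 i]
  ring

section Frobenius

variable {m n : ℕ}

lemma frobInner_comm (A B : Matrix (Fin m) (Fin n) ℝ) : frobInner A B = frobInner B A := by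
  rw [frobInner, frobInner, ← trace_transpose, transpose_mul, transpose_transpose]

lemma frobInner_self_nonneg (A : Matrix (Fin m) (Fin n) ℝ) : 0 ≤ frobInner A A := by
  simpa [frobInner] using (posSemidef_conjTranspose_mul_self A).trace_nonneg

lemma frobNorm_sq (A : Matrix (Fin m) (Fin n) ℝ) : frobNorm A ^ 2 = frobInner A A :=
  Real.sq_sqrt (frobInner_self_nonneg A)

lemma frobInner_sub_left (A B C : Matrix (Fin m) (Fin n) ℝ) :
    frobInner (A - B) C = frobInner A C - frobInner B C := by
  rw [frobInner, transpose_sub, Matrix.sub_mul, trace_sub, frobInner, frobInner]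

lemma frobInner_sub_right (A B C : Matrix (Fin m) (Fin n) ℝ) :
    frobInner A (B - C) = frobInner A B - frobInner A C := by
  rw [frobInner, Matrix.mul_sub, trace_sub, frobInner, frobInner]

lemma sq_frobNorm_sub_sq_frobNorm (A B : Matrix (Fin m) (Fin n) ℝ) :
    frobNorm A ^ 2 - frobNorm B ^ 2 = frobInner A (A - B) + frobInner B (A - B) := by
  rw [frobNorm_sq, frobNorm_sq, frobInner_sub_right, frobInner_sub_right, frobInner_comm B A]
  ring

lemma sq_frobNorm_sub_sq_frobNorm_le (A B : Matrix (Fin m) (Fin n) ℝ) :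
    frobNorm A ^ 2 - frobNorm B ^ 2 ≤ 2 * frobInner A (A - B) := by
  have h := frobInner_self_nonneg (A - B)
  rw [frobInner_sub_left] at h
  rw [sq_frobNorm_sub_sq_frobNorm]
  linarith

lemma frobInner_sum_mul {ι : Type*} [Fintype ι] {p : ι → ℕ} (E : Matrix (Fin m) (Fin n) ℝ)
    (X : ∀ k, Matrix (Fin m) (Fin (p k)) ℝ) (D : ∀ k, Matrix (Fin (p k)) (Fin n) ℝ) :
    frobInner E (∑ k, X k * D k) = ∑ k, frobInner ((X k)ᵀ * E) (D k) := by
  simp only [frobInner, Matrix.mul_sum, trace_sum, transpose_mul, transpose_transpose,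
    Matrix.mul_assoc]

lemma frobInner_eq_sum_inner {ι : Type*} [Fintype ι] (M D : Matrix (Fin m) (Fin n) ℝ)
    (b : OrthonormalBasis ι ℝ (EuclideanSpace ℝ (Fin n))) :
    frobInner M D = ∑ i, ⟪toEuclideanLin M (b i), toEuclideanLin D (b i)⟫_ℝ := by
  rw [frobInner, Matrix.trace_eq_sum_inner_toEuclideanLin _ b]
  refine Finset.sum_congr rfl fun i _ => ?_
  rw [← conjTranspose_eq_transpose_of_trivial, toLpLin_mul (q := 2), LinearMap.comp_apply,
    toEuclideanLin_conjTranspose_eq_adjoint, LinearMap.adjoint_inner_right]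

end Frobenius

lemma norm_toEuclideanLin_apply_le {m n : ℕ} (M : Matrix (Fin m) (Fin n) ℝ)
    (x : EuclideanSpace ℝ (Fin n)) : ‖toEuclideanLin M x‖ ≤ opNorm M * ‖x‖ :=
  (LinearMap.toContinuousLinearMap (toEuclideanLin M)).le_opNorm x

lemma nucNorm_eq_sum_sqrt_eigenvalues {m n : ℕ} (D : Matrix (Fin m) (Fin n) ℝ) :
    nucNorm D = ∑ i, √((posSemidef_conjTranspose_mul_self D).1.eigenvalues i) := by
  rw [nucNorm, trace_mul_cycle, Unitary.coe_star_mul_self, Matrix.one_mul, trace_diagonal]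
  rfl

lemma nucNorm_nonneg {m n : ℕ} (D : Matrix (Fin m) (Fin n) ℝ) : 0 ≤ nucNorm D := by
  rw [nucNorm_eq_sum_sqrt_eigenvalues]
  exact Finset.sum_nonneg fun i _ => Real.sqrt_nonneg _

lemma abs_frobInner_le_opNorm_mul_nucNorm {m n : ℕ} (M D : Matrix (Fin m) (Fin n) ℝ) :
    |frobInner M D| ≤ opNorm M * nucNorm D := by
  set hH := (posSemidef_conjTranspose_mul_self D).1
  rw [frobInner_eq_sum_inner M D hH.eigenvectorBasis, nucNorm_eq_sum_sqrt_eigenvalues,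
    Finset.mul_sum]
  refine (Finset.abs_sum_le_sum_abs _ _).trans (Finset.sum_le_sum fun i _ => ?_)
  have hM : ‖toEuclideanLin M (hH.eigenvectorBasis i)‖ ≤ opNorm M := by
    simpa [hH.eigenvectorBasis.orthonormal.1 i] using
      norm_toEuclideanLin_apply_le M (hH.eigenvectorBasis i)
  have hD : ‖toEuclideanLin D (hH.eigenvectorBasis i)‖ = √(hH.eigenvalues i) := by
    rw [← norm_toEuclideanLin_eigenvectorBasis_sq, Real.sqrt_sq (norm_nonneg _)]
  calc _ ≤ ‖toEuclideanLin M (hH.eigenvectorBasis i)‖ * √(hH.eigenvalues i) :=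
        hD ▸ abs_real_inner_le_norm _ _
    _ ≤ opNorm M * √(hH.eigenvalues i) := mul_le_mul_of_nonneg_right hM (Real.sqrt_nonneg _)

lemma abs_frobInner_sum_mul_le {ι : Type*} [Fintype ι] {m n : ℕ} {p : ι → ℕ}
    (E : Matrix (Fin m) (Fin n) ℝ) (X : ∀ k, Matrix (Fin m) (Fin (p k)) ℝ)
    (D : ∀ k, Matrix (Fin (p k)) (Fin n) ℝ) {c : ℝ} (w : ι → ℝ)
    (hc : ∀ k, opNorm ((X k)ᵀ * E) ≤ c * w k) :
    |frobInner E (∑ k, X k * D k)| ≤ c * ∑ k, w k * nucNorm (D k) := by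
  rw [frobInner_sum_mul, Finset.mul_sum]
  refine (Finset.abs_sum_le_sum_abs _ _).trans (Finset.sum_le_sum fun k _ => ?_)
  calc _ ≤ opNorm ((X k)ᵀ * E) * nucNorm (D k) := abs_frobInner_le_opNorm_mul_nucNorm _ _
    _ ≤ c * w k * nucNorm (D k) := mul_le_mul_of_nonneg_right (hc k) (nucNorm_nonneg _)
    _ = c * (w k * nucNorm (D k)) := mul_assoc _ _ _

theorem stmt_5_general (n q K : ℕ) (hn : 0 < n) (hq : 0 < q) (p : Fin K → ℕ)
    (Y : Matrix (Fin n) (Fin q) ℝ)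
    (X : ∀ k, Matrix (Fin n) (Fin (p k)) ℝ)
    (Bstar Bhat : ∀ k, Matrix (Fin (p k)) (Fin q) ℝ)
    (lam t η : ℝ) (w : Fin K → ℝ)
    (hη : 0 < η)
    (hE : ∀ k, opNorm ((X k)ᵀ * (Y - ∑ j, X j * Bstar j)) ≤ n * q * t * lam * w k / (1 + η))
    (hKKT : ∀ k, opNorm ((X k)ᵀ * (Y - ∑ j, X j * Bhat j)) ≤ lam * t * n * q * w k) :
    -((2 + η) / (1 + η)) * t * lam * (∑ k, w k * nucNorm (Bhat k - Bstar k)) ≤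
        (frobNorm (Y - ∑ k, X k * Bstar k)) ^ 2 / (n * q) -
          (frobNorm (Y - ∑ k, X k * Bhat k)) ^ 2 / (n * q) ∧
      (frobNorm (Y - ∑ k, X k * Bstar k)) ^ 2 / (n * q) -
          (frobNorm (Y - ∑ k, X k * Bhat k)) ^ 2 / (n * q) ≤
        (2 * t * lam / (1 + η)) * (∑ k, w k * nucNorm (Bhat k - Bstar k)) := by
  have hnq : (0 : ℝ) < n * q := mul_pos (Nat.cast_pos.mpr hn) (Nat.cast_pos.mpr hq)
  set C := ∑ k, w k * nucNorm (Bhat k - Bstar k)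
  have hdiff : (Y - ∑ k, X k * Bstar k) - (Y - ∑ k, X k * Bhat k)
      = ∑ k, X k * (Bhat k - Bstar k) := by
    simp only [Matrix.mul_sub, Finset.sum_sub_distrib, sub_sub_sub_cancel_left]
  have hstar := abs_le.mp <| abs_frobInner_sum_mul_le _ X (fun k => Bhat k - Bstar k) w
    (c := n * q * t * lam / (1 + η)) fun k => (hE k).trans_eq (by ring)
  have hhat := abs_le.mp <| abs_frobInner_sum_mul_le _ X (fun k => Bhat k - Bstar k) w hKKT
  have hsplit := sq_frobNorm_sub_sq_frobNorm (Y - ∑ k, X k * Bstar k) (Y - ∑ k, X k * Bhat k)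
  have hupper := sq_frobNorm_sub_sq_frobNorm_le (Y - ∑ k, X k * Bstar k) (Y - ∑ k, X k * Bhat k)
  rw [hdiff] at hsplit hupper
  rw [← sub_div, le_div_iff₀ hnq, div_le_iff₀ hnq]
  constructor
  · have hcoef : -((2 + η) / (1 + η)) * t * lam * C * (n * q)
        = -(n * q * t * lam / (1 + η) * C) - lam * t * n * q * C := by
      field_simp; ring
    linarith [hstar.1, hhat.1]
  · have hcoef : 2 * t * lam / (1 + η) * C * (n * q) = 2 * (n * q * t * lam / (1 + η) * C) := by
      field_simp
    linarith [hstar.2]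

/-- Two-sided sandwich bound on `σ*² - σ̂²` in terms of the weighted nuclear norm
estimation error, under the noise-control event (i) and the KKT bound (ii). -/
theorem stmt_5 (n q K : ℕ) (hn : 0 < n) (hq : 0 < q) (p : Fin K → ℕ)
    (Y : Matrix (Fin n) (Fin q) ℝ)
    (X : ∀ k, Matrix (Fin n) (Fin (p k)) ℝ)
    (Bstar Bhat : ∀ k, Matrix (Fin (p k)) (Fin q) ℝ)
    (lam t η : ℝ) (w : Fin K → ℝ)
    (hlam : 0 < lam) (ht : 0 < t) (hη : 0 < η) (hw : ∀ k, 0 < w k)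
    (hE : ∀ k, opNorm ((X k)ᵀ * (Y - ∑ j, X j * Bstar j)) ≤ n * q * t * lam * w k / (1 + η))
    (hKKT : ∀ k, opNorm ((X k)ᵀ * (Y - ∑ j, X j * Bhat j)) ≤ lam * t * n * q * w k) :
    -((2 + η) / (1 + η)) * t * lam * (∑ k, w k * nucNorm (Bhat k - Bstar k)) ≤
        (frobNorm (Y - ∑ k, X k * Bstar k)) ^ 2 / (n * q) -
          (frobNorm (Y - ∑ k, X k * Bhat k)) ^ 2 / (n * q) ∧
      (frobNorm (Y - ∑ k, X k * Bstar k)) ^ 2 / (n * q) -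
          (frobNorm (Y - ∑ k, X k * Bhat k)) ^ 2 / (n * q) ≤
        (2 * t * lam / (1 + η)) * (∑ k, w k * nucNorm (Bhat k - Bstar k)) :=
  stmt_5_general n q K hn hq p Y X Bstar Bhat lam t η w hη hE hKKT
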